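/- (Consensus under mean estimation in the limit of full platform susceptibility.) Suppose α_i ∈ (0,1) for all i ∈ V′, and β_i = 1 for all i ∈ {1,…,n}. Then for every innate opinion vector x* ∈ [0,1]^n the mean-estimation dynamics converge to a limit x_PS which is a consensus: there exists c ∈ [0,1] such that (x_PS)_i = c for all i ∈ {1,…,n}. -/

import Mathlib

open Matrix Filter Topology

/-!
With `β ≡ 1` the dynamics are the linear iteration `x⁽ᵗ⁺¹⁾ = P x⁽ᵗ⁾` for the row-stochastic
matrix `P = Ψ_K M`. The columns of `P` outside `V′` vanish, while on `V′` the matrix `P` has a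
positive diagonal and positive entries along the edges of the connected graph induced on `V′`;
hence, for some `c ∈ V′`, the column `c` of `P^m` is entrywise positive for all large `m`.
Applying `P^m` then shrinks the oscillation `max x - min x` by the factor
`1 - minᵢ (P^m)_{ic} < 1`, while `max x` never increases and `min x` never decreases, so both
converge to one common value between `min x*` and `max x*`.
-/

/-- Row-normalized adjacency matrix `W = deg⁻¹ A` of a simple graph. -/
noncomputable def rowNormAdj {n : ℕ} (G : SimpleGraph (Fin n)) [DecidableRel G.Adj] :
    Matrix (Fin n) (Fin n) ℝ :=
  Matrix.of fun i j => (G.adjMatrix ℝ) i j / (G.degree i : ℝ)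

/-- The multi-step influence matrix
`Ψ_K = Σ_{k=0}^{K−1} (Λ_α W)^k (I − Λ_α) + (Λ_α W)^K`. -/
noncomputable def Psi {n : ℕ} (K : ℕ) (α : Fin n → ℝ) (W : Matrix (Fin n) (Fin n) ℝ) :
    Matrix (Fin n) (Fin n) ℝ :=
  (∑ k ∈ Finset.range K, (Matrix.diagonal α * W) ^ k * (1 - Matrix.diagonal α))
    + (Matrix.diagonal α * W) ^ K

/-- The mean-estimation predictor: identity on the observed set
`V′ = {i : i < n′}`, and the mean over `V′` for unobserved individuals. -/
noncomputable def meanM (n nP : ℕ) : Matrix (Fin n) (Fin n) ℝ :=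
  Matrix.of fun i j =>
    if (i : ℕ) < nP then (if i = j then (1 : ℝ) else 0)
    else if (j : ℕ) < nP then (1 : ℝ) / nP else 0

lemma tendsto_zero_of_antitone_of_le_mul {f : ℕ → ℝ} (hf : Antitone f) (hf0 : ∀ t, 0 ≤ f t)
    {m : ℕ} (hm : m ≠ 0) {q : ℝ} (hq0 : 0 ≤ q) (hq1 : q < 1) (hfm : ∀ t, f (t + m) ≤ q * f t) :
    Tendsto f atTop (𝓝 0) := by
  have hgeo (k : ℕ) : f (k * m) ≤ q ^ k * f 0 := by
    induction k with
    | zero => simp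
    | succ k ih =>
      calc f ((k + 1) * m) = f (k * m + m) := by rw [add_one_mul]
        _ ≤ q * f (k * m) := hfm _
        _ ≤ q * (q ^ k * f 0) := mul_le_mul_of_nonneg_left ih hq0
        _ = q ^ (k + 1) * f 0 := by ring
  have hlim : Tendsto (fun t => q ^ (t / m) * f 0) atTop (𝓝 0) := by
    simpa using ((tendsto_pow_atTop_nhds_zero_of_lt_one hq0 hq1).comp
      (Nat.tendsto_div_const_atTop hm)).mul_const (f 0)
  exact tendsto_of_tendsto_of_tendsto_of_le_of_le tendsto_const_nhds hlim hf0
    fun t => (hf (Nat.div_mul_le_self t m)).trans (hgeo (t / m))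

lemma exists_tendsto_of_antitone_of_monotone {s r : ℕ → ℝ} (hs : Antitone s) (hr : Monotone r)
    (hrs : ∀ t, r t ≤ s t) (hgap : Tendsto (fun t => s t - r t) atTop (𝓝 0)) :
    ∃ L ∈ Set.Icc (r 0) (s 0), Tendsto s atTop (𝓝 L) ∧ Tendsto r atTop (𝓝 L) := by
  have hsL : Tendsto s atTop (𝓝 (⨅ t, s t)) :=
    tendsto_atTop_ciInf hs ⟨r 0, Set.forall_mem_range.2 fun t => (hr t.zero_le).trans (hrs t)⟩
  have hrL : Tendsto r atTop (𝓝 (⨅ t, s t)) := by simpa using hsL.sub hgap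
  exact ⟨_, ⟨hr.ge_of_tendsto hrL 0, hs.le_of_tendsto hsL 0⟩, hsL, hrL⟩

namespace Matrix

variable {ι : Type*} [Fintype ι]

lemma mul_apply_nonneg {A B : Matrix ι ι ℝ} (hA : ∀ i j, 0 ≤ A i j) (hB : ∀ i j, 0 ≤ B i j)
    (i j : ι) : 0 ≤ (A * B) i j :=
  Finset.sum_nonneg fun k _ => mul_nonneg (hA i k) (hB k j)

lemma mul_apply_pos_of_pos {A B : Matrix ι ι ℝ} (hA : ∀ i j, 0 ≤ A i j)
    (hB : ∀ i j, 0 ≤ B i j) {i l j : ι} (hil : 0 < A i l) (hlj : 0 < B l j) :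
    0 < (A * B) i j :=
  Finset.sum_pos' (fun k _ => mul_nonneg (hA i k) (hB k j))
    ⟨l, Finset.mem_univ l, mul_pos hil hlj⟩

variable [DecidableEq ι]

lemma pow_apply_self_pos {A : Matrix ι ι ℝ} (hA : ∀ i j, 0 ≤ A i j) {c : ι} (hc : 0 < A c c)
    (m : ℕ) : 0 < (A ^ m) c c := by
  induction m with
  | zero => simp
  | succ m ih => exact pow_succ A m ▸ mul_apply_pos_of_pos (pow_apply_nonneg hA m) hA ih hc

lemma eventually_pow_apply_pos_of_pos {A : Matrix ι ι ℝ} (hA : ∀ i j, 0 ≤ A i j) {a b c : ι}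
    (hab : 0 < A a b) (hbc : ∀ᶠ m in atTop, 0 < (A ^ m) b c) :
    ∀ᶠ m in atTop, 0 < (A ^ m) a c := by
  obtain ⟨N, hN⟩ := eventually_atTop.1 hbc
  refine eventually_atTop.2 ⟨N + 1, fun m hm => ?_⟩
  obtain ⟨k, rfl⟩ : ∃ k, m = k + 1 := ⟨m - 1, by omega⟩
  exact pow_succ' A k ▸ mul_apply_pos_of_pos hA (pow_apply_nonneg hA k) hab (hN k (by omega))

lemma eventually_pow_apply_pos_of_reachable {A : Matrix ι ι ℝ} (hA : ∀ i j, 0 ≤ A i j)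
    {G : SimpleGraph ι} {S : Set ι} (hadj : ∀ i ∈ S, ∀ j ∈ S, G.Adj i j → 0 < A i j)
    {a c : S} (hc : 0 < A c c) (hac : (G.induce S).Reachable a c) :
    ∀ᶠ m in atTop, 0 < (A ^ m) a c := by
  obtain ⟨p⟩ := hac
  induction p with
  | nil => exact Eventually.of_forall (pow_apply_self_pos hA hc)
  | cons h _ ih =>
    exact eventually_pow_apply_pos_of_pos hA (hadj _ (Subtype.prop _) _ (Subtype.prop _) h) (ih hc)

lemma exists_eventually_pow_apply_pos_of_induce_connected {P : Matrix ι ι ℝ}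
    (hP : P ∈ rowStochastic ℝ ι) {G : SimpleGraph ι} {S : Set ι} (hS : (G.induce S).Connected)
    (hdiag : ∀ j ∈ S, 0 < P j j) (hadj : ∀ i ∈ S, ∀ j ∈ S, G.Adj i j → 0 < P i j)
    (hcol : ∀ i, ∀ j ∉ S, P i j = 0) : ∃ c, ∀ᶠ m in atTop, ∀ i, 0 < (P ^ m) i c := by
  obtain ⟨c⟩ := hS.nonempty
  have hS_pos (j : S) : ∀ᶠ m in atTop, 0 < (P ^ m) j c :=
    eventually_pow_apply_pos_of_reachable hP.1 hadj (hdiag c c.2) (hS.preconnected j c)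
  refine ⟨c, eventually_all.2 fun i => ?_⟩
  obtain ⟨j, -, hij⟩ : ∃ j ∈ Finset.univ, (0 : ℝ) < P i j :=
    Finset.exists_lt_of_sum_lt (by simp [sum_row_of_mem_rowStochastic hP i])
  have hjS : j ∈ S := by_contra fun hj => hij.ne' (hcol i j hj)
  exact eventually_pow_apply_pos_of_pos hP.1 hij (hS_pos ⟨j, hjS⟩)

section Contraction

variable {P : Matrix ι ι ℝ} (hP : P ∈ rowStochastic ℝ ι) {v : ι → ℝ}
include hP

lemma mul_sub_le_mulVec_apply_sub {a δ : ℝ} (hv : ∀ j, a ≤ v j) {i j₀ : ι}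
    (hδ : δ ≤ P i j₀) : δ * (v j₀ - a) ≤ (P *ᵥ v) i - a := by
  have hsum : (P *ᵥ v) i - a = ∑ j, P i j * (v j - a) := by
    simp only [mul_sub, Finset.sum_sub_distrib, ← Finset.sum_mul,
      sum_row_of_mem_rowStochastic hP i, one_mul]
    rfl
  rw [hsum]
  calc δ * (v j₀ - a) ≤ P i j₀ * (v j₀ - a) :=
        mul_le_mul_of_nonneg_right hδ (sub_nonneg.2 (hv j₀))
    _ ≤ ∑ j, P i j * (v j - a) :=
      Finset.single_le_sum (fun j _ => mul_nonneg (hP.1 i j) (sub_nonneg.2 (hv j)))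
        (Finset.mem_univ j₀)

lemma mul_sub_le_sub_mulVec_apply {b δ : ℝ} (hv : ∀ j, v j ≤ b) {i j₀ : ι}
    (hδ : δ ≤ P i j₀) : δ * (b - v j₀) ≤ b - (P *ᵥ v) i := by
  have := mul_sub_le_mulVec_apply_sub hP (v := -v) (fun j => neg_le_neg (hv j)) hδ
  simp only [mulVec_neg, Pi.neg_apply] at this
  linarith

lemma mulVec_apply_le_ciSup (i : ι) : (P *ᵥ v) i ≤ ⨆ j, v j := by
  have := mul_sub_le_sub_mulVec_apply hP (fun j => le_ciSup (Finite.bddAbove_range v) j)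
    (hP.1 i i)
  linarith

lemma ciInf_le_mulVec_apply (i : ι) : ⨅ j, v j ≤ (P *ᵥ v) i := by
  have := mul_sub_le_mulVec_apply_sub hP (fun j => ciInf_le (Finite.bddBelow_range v) j)
    (hP.1 i i)
  linarith

variable [Nonempty ι]

lemma ciSup_sub_ciInf_mulVec_le {δ : ℝ} {j₀ : ι} (hδ : ∀ i, δ ≤ P i j₀) :
    (⨆ i, (P *ᵥ v) i) - ⨅ i, (P *ᵥ v) i ≤ (1 - δ) * ((⨆ i, v i) - ⨅ i, v i) := by
  have hup : (⨆ i, (P *ᵥ v) i) ≤ (⨆ i, v i) - δ * ((⨆ i, v i) - v j₀) := ciSup_le fun i => by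
    linarith [mul_sub_le_sub_mulVec_apply hP (le_ciSup (Finite.bddAbove_range v)) (hδ i)]
  have hlo : (⨅ i, v i) + δ * (v j₀ - ⨅ i, v i) ≤ ⨅ i, (P *ᵥ v) i := le_ciInf fun i => by
    linarith [mul_sub_le_mulVec_apply_sub hP (ciInf_le (Finite.bddBelow_range v)) (hδ i)]
  linarith

theorem exists_tendsto_pow_mulVec_const {j₀ : ι} (hpos : ∀ᶠ m in atTop, ∀ i, 0 < (P ^ m) i j₀)
    {a b : ℝ} (hv : ∀ i, v i ∈ Set.Icc a b) :
    ∃ c ∈ Set.Icc a b, Tendsto (fun t => P ^ t *ᵥ v) atTop (𝓝 fun _ => c) := by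
  obtain ⟨m, hm, hm0⟩ := (hpos.and (eventually_ne_atTop 0)).exists
  obtain ⟨i₀, hi₀⟩ := Finite.exists_min fun i => (P ^ m) i j₀
  set x : ℕ → ι → ℝ := fun t => P ^ t *ᵥ v
  have hx_add (t k : ℕ) : x (t + k) = P ^ k *ᵥ x t := by
    simp only [x, add_comm t k, pow_add, mulVec_mulVec]
  have hxs (t : ℕ) (i : ι) : x t i ≤ ⨆ j, x t j := le_ciSup (Finite.bddAbove_range _) i
  have hrx (t : ℕ) (i : ι) : ⨅ j, x t j ≤ x t i := ciInf_le (Finite.bddBelow_range _) i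
  have hs : Antitone fun t => ⨆ i, x t i := antitone_nat_of_succ_le fun t => ciSup_le fun i => by
    simpa only [hx_add t 1, pow_one] using mulVec_apply_le_ciSup hP i
  have hr : Monotone fun t => ⨅ i, x t i := monotone_nat_of_le_succ fun t => le_ciInf fun i => by
    simpa only [hx_add t 1, pow_one] using ciInf_le_mulVec_apply hP i
  have hgap : Tendsto (fun t => (⨆ i, x t i) - ⨅ i, x t i) atTop (𝓝 0) :=
    tendsto_zero_of_antitone_of_le_mul (fun t u htu => sub_le_sub (hs htu) (hr htu))
      (fun t => sub_nonneg.2 ((hrx t i₀).trans (hxs t i₀))) hm0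
      (sub_nonneg.2 (le_one_of_mem_rowStochastic (pow_mem hP m))) (sub_lt_self 1 (hm i₀))
      fun t => hx_add t m ▸ ciSup_sub_ciInf_mulVec_le (pow_mem hP m) hi₀
  obtain ⟨L, ⟨hrL0, hsL0⟩, hsL, hrL⟩ := exists_tendsto_of_antitone_of_monotone hs hr
    (fun t => (hrx t i₀).trans (hxs t i₀)) hgap
  have hx0 : x 0 = v := by simp [x]
  refine ⟨L, ⟨?_, ?_⟩, tendsto_pi_nhds.2 fun i =>
    tendsto_of_tendsto_of_tendsto_of_le_of_le hrL hsL (hrx · i) (hxs · i)⟩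
  · exact (le_ciInf fun i => hx0 ▸ (hv i).1).trans hrL0
  · exact hsL0.trans (ciSup_le fun i => hx0 ▸ (hv i).2)

end Contraction

end Matrix

section Model

variable {n : ℕ}

lemma rowNormAdj_mem_rowStochastic (G : SimpleGraph (Fin n)) [DecidableRel G.Adj]
    (hdeg : ∀ i, 0 < G.degree i) : rowNormAdj G ∈ rowStochastic ℝ (Fin n) := by
  refine mem_rowStochastic_iff_sum.2
    ⟨fun i j => div_nonneg ?_ (Nat.cast_nonneg _), fun i => ?_⟩
  · rw [SimpleGraph.adjMatrix_apply]
    split_ifs <;> norm_num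
  have hsum : ∑ j, G.adjMatrix ℝ i j = G.degree i := by
    simpa [mulVec, dotProduct] using
      SimpleGraph.adjMatrix_mulVec_const_apply (G := G) (a := (1 : ℝ)) (v := i)
  simp only [rowNormAdj, of_apply, ← Finset.sum_div, hsum]
  exact div_self (Nat.cast_ne_zero.2 (hdeg i).ne')

lemma rowNormAdj_apply_pos {G : SimpleGraph (Fin n)} [DecidableRel G.Adj] {i j : Fin n}
    (h : G.Adj i j) : 0 < rowNormAdj G i j := by
  simpa [rowNormAdj, SimpleGraph.adjMatrix_apply, h] using h.degree_pos_left

lemma meanM_mem_rowStochastic {nP : ℕ} (h1 : 1 ≤ nP) (h2 : nP ≤ n) :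
    meanM n nP ∈ rowStochastic ℝ (Fin n) := by
  refine mem_rowStochastic_iff_sum.2 ⟨fun i j => ?_, fun i => ?_⟩
  · simp only [meanM, of_apply]
    split_ifs <;> positivity
  · by_cases hi : (i : ℕ) < nP
    · simp [meanM, hi]
    · have : (nP : ℝ) ≠ 0 := by positivity
      simp [meanM, hi, Finset.sum_ite, Fin.card_filter_val_lt, min_eq_right h2, this]

lemma meanM_apply_self {nP : ℕ} {j : Fin n} (hj : (j : ℕ) < nP) : meanM n nP j j = 1 := by
  simp [meanM, hj]

lemma meanM_apply_of_le {nP : ℕ} (i : Fin n) {j : Fin n} (hj : nP ≤ (j : ℕ)) :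
    meanM n nP i j = 0 := by
  simp only [meanM, of_apply]
  split_ifs with hi hij
  · exact absurd (hij ▸ hi) hj.not_gt
  · rfl
  · omega
  · rfl

lemma Psi_zero (α : Fin n → ℝ) (W : Matrix (Fin n) (Fin n) ℝ) : Psi 0 α W = 1 := by
  simp [Psi]

lemma Psi_succ (K : ℕ) (α : Fin n → ℝ) (W : Matrix (Fin n) (Fin n) ℝ) :
    Psi (K + 1) α W = 1 - diagonal α + diagonal α * W * Psi K α W := by
  simp only [Psi, Finset.sum_range_succ', pow_succ', pow_zero, one_mul, mul_add, Finset.mul_sum,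
    mul_assoc]
  abel

variable {α : Fin n → ℝ} (hα : ∀ i, α i ∈ Set.Icc 0 1)
include hα

lemma one_sub_diagonal_apply_nonneg (i j : Fin n) : 0 ≤ (1 - diagonal α : Matrix _ _ ℝ) i j := by
  rcases eq_or_ne i j with rfl | h
  · simpa using (hα i).2
  · simp [one_apply_ne h, diagonal_apply_ne _ h]

variable {W : Matrix (Fin n) (Fin n) ℝ} (hW : W ∈ rowStochastic ℝ (Fin n))
include hW

lemma diagonal_mul_apply_nonneg (i j : Fin n) : 0 ≤ (diagonal α * W) i j := by
  rw [diagonal_mul]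
  exact mul_nonneg (hα i).1 (hW.1 i j)

lemma Psi_mem_rowStochastic (K : ℕ) : Psi K α W ∈ rowStochastic ℝ (Fin n) := by
  induction K with
  | zero => exact Psi_zero α W ▸ Submonoid.one_mem _
  | succ K ih =>
    rw [Psi_succ]
    refine ⟨fun i j => add_nonneg (one_sub_diagonal_apply_nonneg hα i j)
      (mul_apply_nonneg (diagonal_mul_apply_nonneg hα hW) ih.1 i j), ?_⟩
    rw [add_mulVec, sub_mulVec, ← mulVec_mulVec, ← mulVec_mulVec, ih.2, hW.2, one_mulVec]
    ext i
    simp [mulVec_diagonal]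

lemma one_sub_le_Psi_apply_self (K : ℕ) (i : Fin n) : 1 - α i ≤ Psi K α W i i := by
  cases K with
  | zero => simpa [Psi_zero] using (hα i).1
  | succ K =>
    simpa [Psi_succ] using
      mul_apply_nonneg (diagonal_mul_apply_nonneg hα hW) (Psi_mem_rowStochastic hα hW K).1 i i

lemma Psi_apply_pos {K : ℕ} (hK : 1 ≤ K) {i j : Fin n} (hαi : 0 < α i) (hαj : α j < 1)
    (hWij : 0 < W i j) : 0 < Psi K α W i j := by
  obtain ⟨K, rfl⟩ := Nat.exists_eq_add_of_le' hK
  rw [Psi_succ, Matrix.add_apply]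
  refine add_pos_of_nonneg_of_pos (one_sub_diagonal_apply_nonneg hα i j)
    (mul_apply_pos_of_pos (diagonal_mul_apply_nonneg hα hW) (Psi_mem_rowStochastic hα hW K).1
      (l := j) ?_ ?_)
  · rw [diagonal_mul]
    exact mul_pos hαi hWij
  · linarith [one_sub_le_Psi_apply_self hα hW K j]

end Model

lemma exists_eventually_pow_Psi_mul_meanM_apply_pos {n : ℕ} {G : SimpleGraph (Fin n)}
    {nP : ℕ} (hnP1 : 1 ≤ nP) (hnPn : nP ≤ n)
    (hsub : (G.induce {i : Fin n | (i : ℕ) < nP}).Connected) {K : ℕ} (hK : 1 ≤ K)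
    {α : Fin n → ℝ} (hα : ∀ i, α i ∈ Set.Icc (0 : ℝ) 1)
    (hαV : ∀ i : Fin n, (i : ℕ) < nP → α i ∈ Set.Ioo (0 : ℝ) 1)
    {W : Matrix (Fin n) (Fin n) ℝ} (hW : W ∈ rowStochastic ℝ (Fin n))
    (hWG : ∀ i j, G.Adj i j → 0 < W i j) :
    ∃ c, ∀ᶠ m in atTop, ∀ i, 0 < ((Psi K α W * meanM n nP) ^ m) i c := by
  have hΨ := Psi_mem_rowStochastic hα hW K
  have hM := meanM_mem_rowStochastic hnP1 hnPn
  have hpos {i j : Fin n} (hj : (j : ℕ) < nP) (hij : 0 < Psi K α W i j) :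
      0 < (Psi K α W * meanM n nP) i j :=
    mul_apply_pos_of_pos hΨ.1 hM.1 hij (by rw [meanM_apply_self hj]; exact one_pos)
  refine exists_eventually_pow_apply_pos_of_induce_connected (mul_mem hΨ hM) hsub
    (fun j hj => hpos hj ?_)
    (fun i hi j hj hij =>
      hpos hj (Psi_apply_pos hα hW hK (hαV i hi).1 (hαV j hj).2 (hWG i j hij)))
    (fun i j hj => by simp [mul_apply, meanM_apply_of_le _ (not_lt.1 hj)])
  linarith [one_sub_le_Psi_apply_self hα hW K j, (hαV j hj).2]

/-- consensus under mean estimation with full platform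
susceptibility `β_i = 1`: the mean-estimation dynamics converge to a consensus
`c·1` with `c ∈ [0,1]`. -/
theorem consensus_mean_estimation_full_susceptibility {n : ℕ} (hn : 2 ≤ n)
    (G : SimpleGraph (Fin n)) [DecidableRel G.Adj] (hG : G.Connected)
    (nP : ℕ) (hnP1 : 1 ≤ nP) (hnPn : nP ≤ n)
    (hsub : (G.induce {i : Fin n | (i : ℕ) < nP}).Connected)
    (K : ℕ) (hK : 1 ≤ K)
    (α β : Fin n → ℝ) (hα : ∀ i, α i ∈ Set.Icc (0 : ℝ) 1)
    (hαV : ∀ i : Fin n, (i : ℕ) < nP → α i ∈ Set.Ioo (0 : ℝ) 1)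
    (hβ : ∀ i, β i = 1)
    (xstar : Fin n → ℝ) (hx : ∀ i, xstar i ∈ Set.Icc (0 : ℝ) 1)
    (x : ℕ → Fin n → ℝ) (hx0 : x 0 = xstar)
    (hrec : ∀ t, x (t + 1) = Psi K α (rowNormAdj G) *ᵥ
      ((1 - Matrix.diagonal β) *ᵥ xstar + Matrix.diagonal β *ᵥ (meanM n nP *ᵥ x t))) :
    ∃ xPS : Fin n → ℝ, Tendsto x atTop (𝓝 xPS) ∧
      ∃ c ∈ Set.Icc (0 : ℝ) 1, ∀ i, xPS i = c := by
  have : Nontrivial (Fin n) := Fin.nontrivial_iff_two_le.2 hn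
  have hW := rowNormAdj_mem_rowStochastic G fun i => hG.preconnected.degree_pos_of_nontrivial i
  set P := Psi K α (rowNormAdj G) * meanM n nP
  have hP : P ∈ rowStochastic ℝ (Fin n) :=
    mul_mem (Psi_mem_rowStochastic hα hW K) (meanM_mem_rowStochastic hnP1 hnPn)
  have hβ1 : diagonal β = 1 := by simp [show β = 1 from funext hβ]
  have hxP : x = fun t => P ^ t *ᵥ xstar := by
    funext t
    induction t with
    | zero => simp [hx0]
    | succ t ih =>
      rw [hrec, ih, hβ1, sub_self, zero_mulVec, one_mulVec, zero_add, mulVec_mulVec,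
        mulVec_mulVec, pow_succ']
  obtain ⟨c, hc⟩ := exists_eventually_pow_Psi_mul_meanM_apply_pos hnP1 hnPn hsub hK hα hαV hW
    fun _ _ => rowNormAdj_apply_pos
  obtain ⟨L, hL, hlim⟩ := exists_tendsto_pow_mulVec_const hP hc hx
  exact ⟨fun _ => L, hxP ▸ hlim, L, hL, fun _ => rfl⟩
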